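/- Let U be a nonempty convex subset of a separated locally convex space X. If qi(U) ≠ ∅, then qi(U) = qri(U). -/

import Mathlib

open Set Pointwise Topology

/-- The conic hull: cone(S) = ⋃_{t ≥ 0} t • S. -/
def coneHull {E : Type*} [AddCommGroup E] [Module ℝ E] (S : Set E) : Set E :=
  {x | ∃ t : ℝ, 0 ≤ t ∧ ∃ s ∈ S, x = t • s}

/-- The quasi-relative interior. -/
def qri {E : Type*} [AddCommGroup E] [Module ℝ E] [TopologicalSpace E] (U : Set E) : Set E :=
  {x | x ∈ U ∧ ∃ M : Submodule ℝ E, closure (coneHull (U - {x})) = (M : Set E)}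

/-- The quasi interior. -/
def qi {E : Type*} [AddCommGroup E] [Module ℝ E] [TopologicalSpace E] (U : Set E) : Set E :=
  {x | x ∈ U ∧ closure (coneHull (U - {x})) = Set.univ}

/-- The algebraic interior (core). -/
def algCore {E : Type*} [AddCommGroup E] [Module ℝ E] (U : Set E) : Set E :=
  {x | x ∈ U ∧ coneHull (U - {x}) = Set.univ}

/-- The relative algebraic interior (intrinsic core). -/
def icr {E : Type*} [AddCommGroup E] [Module ℝ E] (U : Set E) : Set E :=
  {x | x ∈ U ∧ ∃ M : Submodule ℝ E, coneHull (U - {x}) = (M : Set E)}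

/-- The strong quasi-relative interior. -/
def sqri {E : Type*} [AddCommGroup E] [Module ℝ E] [TopologicalSpace E] (U : Set E) : Set E :=
  {x | x ∈ U ∧ ∃ M : Submodule ℝ E, coneHull (U - {x}) = (M : Set E) ∧ IsClosed (M : Set E)}

/-- The normal cone of U at x. -/
def normalCone {E : Type*} [AddCommGroup E] [Module ℝ E] [TopologicalSpace E]
    (U : Set E) (x : E) : Set (E →L[ℝ] ℝ) :=
  {f | ∀ y ∈ U, f (y - x) ≤ 0}

section

variable {E : Type*} [AddCommGroup E] [Module ℝ E]

theorem subset_coneHull (S : Set E) : S ⊆ coneHull S :=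
  fun s hs => ⟨1, zero_le_one, s, hs, (one_smul ℝ s).symm⟩

theorem coneHull_subset_submodule {S : Set E} {M : Submodule ℝ E} (h : S ⊆ M) :
    coneHull S ⊆ M := by
  rintro _ ⟨t, -, s, hs, rfl⟩
  exact M.smul_mem t (h hs)

theorem sub_singleton_subset_of_mem {U : Set E} {M : Submodule ℝ E} {x a : E}
    (hx : U - {x} ⊆ M) (ha : a ∈ U) : U - {a} ⊆ M := by
  rintro _ ⟨y, hy, b, hb, rfl⟩
  rw [mem_singleton_iff.mp hb]
  change y - a ∈ M
  rw [← sub_sub_sub_cancel_right y a x]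
  exact M.sub_mem (hx (sub_mem_sub hy rfl)) (hx (sub_mem_sub ha rfl))

variable [TopologicalSpace E]

theorem qi_subset_qri (U : Set E) : qi U ⊆ qri U :=
  fun _ ⟨hx, h⟩ => ⟨hx, ⊤, by rw [h, Submodule.top_coe]⟩

/-- The closed subspace `closure (cone (U - x))` contains `U - a`, hence its closed cone,
which is everything when `a ∈ qi U`. -/
theorem mem_qi_of_mem_qri {U : Set E} {a x : E} (ha : a ∈ qi U) (hx : x ∈ qri U) :
    x ∈ qi U := by
  obtain ⟨hxU, M, hM⟩ := hx
  have hUx : U - {x} ⊆ M := hM ▸ (subset_coneHull _).trans subset_closure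
  have hUa : closure (coneHull (U - {a})) ⊆ M :=
    closure_minimal (coneHull_subset_submodule (sub_singleton_subset_of_mem hUx ha.1))
      (hM ▸ isClosed_closure)
  exact ⟨hxU, hM.trans (eq_univ_of_univ_subset (ha.2 ▸ hUa))⟩

end

theorem qi_eq_qri_of_qi_nonempty_general
    {X : Type*} [AddCommGroup X] [Module ℝ X] [TopologicalSpace X]
    (U : Set X) (hqi : (qi U).Nonempty) :
    qi U = qri U := by
  obtain ⟨a, ha⟩ := hqi
  exact (qi_subset_qri U).antisymm fun _ hx => mem_qi_of_mem_qri ha hx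

theorem qi_eq_qri_of_qi_nonempty
    {X : Type*} [AddCommGroup X] [Module ℝ X] [TopologicalSpace X]
    [IsTopologicalAddGroup X] [ContinuousSMul ℝ X] [LocallyConvexSpace ℝ X] [T2Space X]
    (U : Set X) (hne : U.Nonempty) (hconv : Convex ℝ U) (hqi : (qi U).Nonempty) :
    qi U = qri U :=
  qi_eq_qri_of_qi_nonempty_general U hqi
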